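/- If a polynomial differential k-form ω on ℝ^n lies both in the image of the Koszul operator κ (applied to polynomial (k+1)-forms) and in the image of the exterior derivative d (applied to polynomial (k−1)-forms), then ω = 0. -/

import Mathlib

/-! Both `d` and `κ` square to zero, so a form `ω = κμ = dη` satisfies `dω = 0` and `κω = 0`.
Then `dκ + κd` kills `ω`; but on the coefficient of `x^α dx_σ` this operator is multiplication by
`|σ| + |α|` (Euler's identity), so every coefficient of `ω` vanishes except possibly the constant
term of its `0`-form part, which is zero because `ω = dη` has no `0`-form part. -/

open MvPolynomial

/-- Polynomial differential forms on `ℝ^n`: a family of polynomial coefficients indexed by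
subsets `σ ⊆ {1,…,n}`; a `k`-form is supported on sets of cardinality `k`. -/
abbrev PolyForm (n : ℕ) := Finset (Fin n) → MvPolynomial (Fin n) ℝ

/-- The sign `(-1)^{#{j ∈ σ : j < i}}`. -/
noncomputable def sgn {n : ℕ} (σ : Finset (Fin n)) (i : Fin n) : MvPolynomial (Fin n) ℝ :=
  (-1) ^ (σ.filter (fun j => j < i)).card

/-- The exterior derivative `d`. -/
noncomputable def extD (n : ℕ) : PolyForm n →ₗ[ℝ] PolyForm n where
  toFun ω := fun σ => ∑ i ∈ σ, sgn σ i * pderiv i (ω (σ.erase i))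
  map_add' ω η := by
    funext σ
    simp [Pi.add_apply, mul_add, Finset.sum_add_distrib]
  map_smul' c ω := by
    funext σ
    simp [Pi.smul_apply, Finset.smul_sum, mul_smul_comm]

/-- The Koszul operator `κ` (contraction with the position vector field). -/
noncomputable def koszul (n : ℕ) : PolyForm n →ₗ[ℝ] PolyForm n where
  toFun ω := fun σ => ∑ i ∈ σᶜ, sgn σ i * X i * ω (insert i σ)
  map_add' ω η := by
    funext σ
    simp [Pi.add_apply, mul_add, Finset.sum_add_distrib]
  map_smul' c ω := by
    funext σ
    simp [Pi.smul_apply, Finset.smul_sum, mul_smul_comm]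

/-- The space of (polynomial) differential `k`-forms: families supported on index sets of
cardinality `k`. -/
noncomputable def Lambda (n k : ℕ) : Submodule ℝ (PolyForm n) where
  carrier := {ω | ∀ σ, σ.card ≠ k → ω σ = 0}
  zero_mem' := fun σ _ => rfl
  add_mem' := fun ha hb σ h => by simp only [Pi.add_apply, ha σ h, hb σ h, add_zero]
  smul_mem' := fun c ω h σ hσ => by simp only [Pi.smul_apply, h σ hσ, smul_zero]

/-- The form monomial `x^α dx_σ`. -/
noncomputable def formMonomial {n : ℕ} (α : Fin n →₀ ℕ) (σ : Finset (Fin n)) : PolyForm n :=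
  fun τ => if τ = σ then monomial α 1 else 0

/-- The (total) degree `|α|` of a multi-index. -/
def mdeg {n : ℕ} (α : Fin n →₀ ℕ) : ℕ := α.sum fun _ m => m

/-- The linear degree of the form monomial `x^α dx_σ`: the number of `i ∉ σ` with `α i = 1`. -/
def ldeg {n : ℕ} (α : Fin n →₀ ℕ) (σ : Finset (Fin n)) : ℕ :=
  ((σᶜ).filter fun i => α i = 1).card

/-- `H_rΛ^k(ℝ^n)`: `k`-forms with homogeneous degree-`r` polynomial coefficients. -/
noncomputable def Hspace (n r k : ℕ) : Submodule ℝ (PolyForm n) :=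
  Submodule.span ℝ {ω | ∃ α σ, σ.card = k ∧ mdeg α = r ∧ ω = formMonomial α σ}

/-- `P_rΛ^k(ℝ^n)`: `k`-forms with polynomial coefficients of degree at most `r`. -/
noncomputable def Pspace (n r k : ℕ) : Submodule ℝ (PolyForm n) :=
  Submodule.span ℝ {ω | ∃ α σ, σ.card = k ∧ mdeg α ≤ r ∧ ω = formMonomial α σ}

/-- `H_{r,l}Λ^k(ℝ^n)`: homogeneous degree-`r` `k`-forms of linear degree at least `l`. -/
noncomputable def Hl (n r l k : ℕ) : Submodule ℝ (PolyForm n) :=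
  Submodule.span ℝ
    {ω | ∃ α σ, σ.card = k ∧ mdeg α = r ∧ l ≤ ldeg α σ ∧ ω = formMonomial α σ}

/-- `J_rΛ^k(ℝ^n) := Σ_{l ≥ 1} κ H_{r+l-1, l}Λ^{k+1}(ℝ^n)` (here `l` is reindexed as `l+1`). -/
noncomputable def Jspace (n r k : ℕ) : Submodule ℝ (PolyForm n) :=
  ⨆ l : ℕ, Submodule.map (koszul n) (Hl n (r + l) (l + 1) (k + 1))

/-- The trimmed polynomial space `P_r^-Λ^k := P_{r-1}Λ^k ⊕ κ H_{r-1}Λ^{k+1}`. -/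
noncomputable def PminusSpace (n r k : ℕ) : Submodule ℝ (PolyForm n) :=
  Pspace n (r - 1) k ⊔ Submodule.map (koszul n) (Hspace n (r - 1) (k + 1))

/-- The serendipity space `S_rΛ^k := P_rΛ^k + J_rΛ^k + d J_{r+1}Λ^{k-1}`
(the last summand being absent for `k = 0`). -/
noncomputable def Sspace (n r k : ℕ) : Submodule ℝ (PolyForm n) :=
  Pspace n r k ⊔ Jspace n r k ⊔
    (if k = 0 then ⊥ else Submodule.map (extD n) (Jspace n (r + 1) (k - 1)))

/-- The trimmed serendipity space `S_r^-Λ^k := S_{r-1}Λ^k + κ S_{r-1}Λ^{k+1}`. -/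
noncomputable def SminusSpace (n r k : ℕ) : Submodule ℝ (PolyForm n) :=
  Sspace n (r - 1) k ⊔ Submodule.map (koszul n) (Sspace n (r - 1) (k + 1))

theorem Finset.sum_sum_erase_eq_zero_of_antisymm {ι M : Type*} [DecidableEq ι] [AddCommGroup M]
    (s : Finset ι) (f : ι → ι → M) (hf : ∀ i ∈ s, ∀ j ∈ s, i ≠ j → f i j = -f j i) :
    ∑ i ∈ s, ∑ j ∈ s.erase i, f i j = 0 := by
  rw [← Finset.sum_finset_product' s.offDiag s (fun i => s.erase i) (by simp [and_comm, ne_comm])]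
  refine Finset.sum_involution (fun p _ => p.swap) (fun p hp => ?_) (fun p hp _ => ?_)
    (fun p hp => ?_) (fun p _ => rfl)
  · obtain ⟨hi, hj, hij⟩ := Finset.mem_offDiag.mp hp
    rw [Prod.fst_swap, Prod.snd_swap, hf _ hi _ hj hij, neg_add_cancel]
  · exact fun h => (Finset.mem_offDiag.mp hp).2.2 (Prod.ext_iff.mp h).2
  · obtain ⟨hi, hj, hij⟩ := Finset.mem_offDiag.mp hp
    exact Finset.mem_offDiag.mpr ⟨hj, hi, hij.symm⟩

namespace MvPolynomial

variable {σ R : Type*} [CommSemiring R]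

theorem pderiv_pderiv_comm (i j : σ) (p : MvPolynomial σ R) :
    pderiv i (pderiv j p) = pderiv j (pderiv i p) := by
  classical
  induction p using MvPolynomial.induction_on with
  | C a => simp
  | add p q hp hq => simp [hp, hq]
  | mul_X p k hp =>
    simp only [pderiv_mul, map_add, hp, pderiv_X, Pi.single_apply]
    split_ifs <;> simp [add_right_comm]

theorem coeff_sum_X_mul_pderiv [Fintype σ] (p : MvPolynomial σ R) (m : σ →₀ ℕ) :
    coeff m (∑ i, X i * pderiv i p) = m.degree • coeff m p := by
  classical
  induction p using MvPolynomial.induction_on' with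
  | monomial s a =>
    simp only [X_mul_pderiv_monomial, ← Finset.sum_smul, ← Finsupp.degree_eq_sum, coeff_smul,
      coeff_monomial]
    split_ifs with h <;> simp [h]
  | add p q hp hq =>
    simp only [map_add, mul_add, Finset.sum_add_distrib, coeff_add, hp, hq, smul_add]

end MvPolynomial

section Signs

variable {n : ℕ}

theorem sgn_eq_C (σ : Finset (Fin n)) (i : Fin n) :
    sgn σ i = C ((-1 : ℝ) ^ (σ.filter (· < i)).card) := by
  simp [sgn]

theorem sgn_mul_self (σ : Finset (Fin n)) (i : Fin n) : sgn σ i * sgn σ i = 1 := by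
  rw [sgn, ← pow_add, ← two_mul, pow_mul, neg_one_sq, one_pow]

theorem pderiv_sgn_mul (σ : Finset (Fin n)) (i j : Fin n) (p : MvPolynomial (Fin n) ℝ) :
    pderiv j (sgn σ i * p) = sgn σ i * pderiv j p := by
  rw [sgn_eq_C, pderiv_C_mul]

theorem sgn_insert_self (σ : Finset (Fin n)) (i : Fin n) : sgn (insert i σ) i = sgn σ i := by
  simp [sgn, Finset.filter_insert]

theorem sgn_insert {σ : Finset (Fin n)} {i : Fin n} (hi : i ∉ σ) (j : Fin n) :
    sgn (insert i σ) j = (if i < j then -1 else 1) * sgn σ j := by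
  rw [sgn, sgn, Finset.filter_insert]
  split_ifs
  · rw [Finset.card_insert_of_notMem (by simp [hi]), pow_succ, mul_comm]
  · rw [one_mul]

theorem sgn_erase {σ : Finset (Fin n)} {j : Fin n} (hj : j ∈ σ) (i : Fin n) :
    sgn (σ.erase j) i = (if j < i then -1 else 1) * sgn σ i := by
  conv_rhs => rw [← Finset.insert_erase hj, sgn_insert (Finset.notMem_erase j σ), ← mul_assoc]
  split_ifs <;> simp

theorem sgn_erase_self (σ : Finset (Fin n)) (i : Fin n) : sgn (σ.erase i) i = sgn σ i := by
  by_cases hi : i ∈ σ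
  · simp [sgn_erase hi]
  · rw [Finset.erase_eq_of_notMem hi]

theorem ite_lt_swap {α R : Type*} [LinearOrder α] [Ring R] {i j : α} (hij : i ≠ j) :
    (if i < j then -1 else 1 : R) = -(if j < i then -1 else 1) := by
  rcases hij.lt_or_gt with h | h <;> simp [h, h.not_gt]

theorem sgn_mul_sgn_erase {σ : Finset (Fin n)} {i j : Fin n} (hij : i ≠ j)
    (hi : i ∈ σ) (hj : j ∈ σ) :
    sgn σ i * sgn (σ.erase i) j = -(sgn σ j * sgn (σ.erase j) i) := by
  rw [sgn_erase hi, sgn_erase hj, ite_lt_swap hij]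
  ring

theorem sgn_mul_sgn_insert {σ : Finset (Fin n)} {i j : Fin n} (hij : i ≠ j)
    (hi : i ∉ σ) (hj : j ∉ σ) :
    sgn σ i * sgn (insert i σ) j = -(sgn σ j * sgn (insert j σ) i) := by
  rw [sgn_insert hi, sgn_insert hj, ite_lt_swap hij]
  ring

theorem sgn_mul_sgn_erase_of_notMem {σ : Finset (Fin n)} {i j : Fin n}
    (hi : i ∉ σ) (hj : j ∈ σ) :
    sgn σ j * sgn (σ.erase j) i = -(sgn σ i * sgn (insert i σ) j) := by
  rw [sgn_erase hj, sgn_insert hi, ite_lt_swap (ne_of_mem_of_not_mem hj hi)]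
  ring

end Signs

section Operators

variable {n : ℕ}

theorem extD_apply (ω : PolyForm n) (σ : Finset (Fin n)) :
    extD n ω σ = ∑ i ∈ σ, sgn σ i * pderiv i (ω (σ.erase i)) := rfl

theorem koszul_apply (ω : PolyForm n) (σ : Finset (Fin n)) :
    koszul n ω σ = ∑ i ∈ σᶜ, sgn σ i * X i * ω (insert i σ) := rfl

theorem extD_apply_empty (ω : PolyForm n) : extD n ω ∅ = 0 := by
  simp [extD_apply]

theorem extD_extD (η : PolyForm n) : extD n (extD n η) = 0 := by
  funext σ
  simp only [extD_apply, map_sum, Finset.mul_sum, pderiv_sgn_mul, Pi.zero_apply]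
  refine Finset.sum_sum_erase_eq_zero_of_antisymm σ _ fun i hi j hj hij => ?_
  rw [Finset.erase_right_comm, pderiv_pderiv_comm, ← mul_assoc, ← mul_assoc,
    sgn_mul_sgn_erase hij hi hj]
  ring

theorem koszul_koszul (μ : PolyForm n) : koszul n (koszul n μ) = 0 := by
  funext σ
  simp only [koszul_apply, Finset.mul_sum, Finset.compl_insert, Pi.zero_apply]
  refine Finset.sum_sum_erase_eq_zero_of_antisymm σᶜ _ fun i hi j hj hij => ?_
  rw [Finset.insert_comm j i]
  linear_combination (X i * X j * μ (insert i (insert j σ))) *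
    sgn_mul_sgn_insert hij (Finset.mem_compl.mp hi) (Finset.mem_compl.mp hj)

end Operators

section Homotopy

variable {n : ℕ}

theorem extD_koszul_apply (ω : PolyForm n) (σ : Finset (Fin n)) :
    extD n (koszul n ω) σ = ∑ j ∈ σ, (ω σ + X j * pderiv j (ω σ)) +
      ∑ j ∈ σ, ∑ i ∈ σᶜ, sgn σ j * sgn (σ.erase j) i *
        (X i * pderiv j (ω (insert i (σ.erase j)))) := by
  rw [extD_apply, ← Finset.sum_add_distrib]
  refine Finset.sum_congr rfl fun j hj => ?_
  rw [koszul_apply, Finset.compl_erase, Finset.sum_insert (Finset.notMem_compl.mpr hj),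
    Finset.insert_erase hj, sgn_erase_self, map_add, mul_add, mul_assoc, pderiv_sgn_mul,
    ← mul_assoc, sgn_mul_self, one_mul, pderiv_mul, pderiv_X_self, one_mul, map_sum,
    Finset.mul_sum]
  congr 1
  refine Finset.sum_congr rfl fun i hi => ?_
  have hij : i ≠ j := (ne_of_mem_of_not_mem hj (Finset.mem_compl.mp hi)).symm
  rw [mul_assoc, pderiv_sgn_mul, pderiv_mul, pderiv_X_of_ne hij, zero_mul, zero_add]
  ring

theorem koszul_extD_apply (ω : PolyForm n) (σ : Finset (Fin n)) :
    koszul n (extD n ω) σ = ∑ i ∈ σᶜ, X i * pderiv i (ω σ) -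
      ∑ j ∈ σ, ∑ i ∈ σᶜ, sgn σ j * sgn (σ.erase j) i *
        (X i * pderiv j (ω (insert i (σ.erase j)))) := by
  rw [Finset.sum_comm, koszul_apply, ← Finset.sum_sub_distrib]
  refine Finset.sum_congr rfl fun i hi => ?_
  have hi' : i ∉ σ := Finset.mem_compl.mp hi
  rw [extD_apply, Finset.sum_insert hi', sgn_insert_self, Finset.erase_insert hi', mul_add,
    Finset.mul_sum, ← sub_neg_eq_add, ← Finset.sum_neg_distrib]
  congr 1
  · linear_combination X i * pderiv i (ω σ) * sgn_mul_self σ i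
  · refine Finset.sum_congr rfl fun j hj => ?_
    rw [Finset.erase_insert_of_ne (ne_of_mem_of_not_mem hj hi').symm]
    linear_combination -X i * pderiv j (ω (insert i (σ.erase j))) *
      sgn_mul_sgn_erase_of_notMem hi' hj

theorem extD_koszul_add_koszul_extD_apply (ω : PolyForm n) (σ : Finset (Fin n)) :
    extD n (koszul n ω) σ + koszul n (extD n ω) σ =
      σ.card • ω σ + ∑ i, X i * pderiv i (ω σ) := by
  rw [extD_koszul_apply, koszul_extD_apply, ← Finset.sum_add_sum_compl σ, Finset.sum_add_distrib,
    Finset.sum_const]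
  abel

theorem coeff_extD_koszul_add_koszul_extD (ω : PolyForm n) (σ : Finset (Fin n))
    (m : Fin n →₀ ℕ) :
    coeff m (extD n (koszul n ω) σ + koszul n (extD n ω) σ) =
      (σ.card + m.degree) • coeff m (ω σ) := by
  rw [extD_koszul_add_koszul_extD_apply, coeff_add, coeff_smul, coeff_sum_X_mul_pderiv, add_smul]

end Homotopy

theorem image_koszul_inter_image_extD_general (n k : ℕ) (ω : PolyForm n)
    (hκ : ∃ μ ∈ Lambda n (k + 1), koszul n μ = ω)
    (hd : ∃ η ∈ Lambda n (k - 1), extD n η = ω) :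
    ω = 0 := by
  obtain ⟨μ, -, hμω⟩ := hκ
  obtain ⟨η, -, hηω⟩ := hd
  have hκω : koszul n ω = 0 := hμω ▸ koszul_koszul μ
  have hdω : extD n ω = 0 := hηω ▸ extD_extD η
  funext σ
  ext m
  have key := coeff_extD_koszul_add_koszul_extD ω σ m
  rw [hκω, hdω, map_zero, map_zero, Pi.zero_apply, add_zero, coeff_zero, eq_comm,
    smul_eq_zero] at key
  rw [Pi.zero_apply, coeff_zero]
  rcases key with hdeg | hcoeff
  · rw [Finset.card_eq_zero.mp (Nat.eq_zero_of_add_eq_zero_right hdeg), ← hηω, extD_apply_empty,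
      coeff_zero]
  · exact hcoeff

/-- a polynomial `k`-form lying both in the image of `κ` (on polynomial
`(k+1)`-forms) and in the image of `d` (on polynomial `(k-1)`-forms) is zero. -/
theorem image_koszul_inter_image_extD (n k : ℕ) (ω : PolyForm n) (hω : ω ∈ Lambda n k)
    (hκ : ∃ μ ∈ Lambda n (k + 1), koszul n μ = ω)
    (hd : ∃ η ∈ Lambda n (k - 1), extD n η = ω) :
    ω = 0 :=
  image_koszul_inter_image_extD_general n k ω hκ hd
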